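/- If (T₁,T₂) has the skewed bivariate BS distribution with parameters (α₁, α₂, β₁, β₂, λ), then (1/T₁, T₂) has the skewed bivariate BS distribution with parameters (α₁, α₂, 1/β₁, β₂, −λ); equivalently f(1/t₁, t₂; α₁,α₂,1/β₁,β₂,−λ)/t₁² = f(t₁,t₂; α₁,α₂,β₁,β₂,λ) for all t₁, t₂ > 0. -/

import Mathlib

open Real MeasureTheory

/-- Standard normal pdf. -/
noncomputable def phi (x : ℝ) : ℝ := (Real.sqrt (2 * Real.pi))⁻¹ * Real.exp (-x ^ 2 / 2)

/-- Standard normal cdf. -/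
noncomputable def Phi (x : ℝ) : ℝ := ∫ t in Set.Iic x, phi t

noncomputable def aj (a b t : ℝ) : ℝ := (1/a) * (Real.sqrt (t / b) - Real.sqrt (b / t))

/-- Skewed bivariate Birnbaum–Saunders density. -/
noncomputable def fSBVBS (a1 a2 b1 b2 l t1 t2 : ℝ) : ℝ :=
  2 * phi (aj a1 b1 t1) * phi (aj a2 b2 t2) * Phi (l * (aj a1 b1 t1) * (aj a2 b2 t2)) *
    (t1 ^ (-(3:ℝ)/2) * (t1 + b1) / (2 * a1 * Real.sqrt b1)) *
    (t2 ^ (-(3:ℝ)/2) * (t2 + b2) / (2 * a2 * Real.sqrt b2))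

/-! Replacing `(β₁, t₁)` by `(1/β₁, 1/t₁)` negates `a₁`, since `√(t/β)` and `√(β/t)` swap.
The normal density is even and the sign change inside `Φ` is undone by `-λ`, so only the
Jacobian factor changes, and it gains exactly the factor `t₁²`. -/

lemma aj_one_div_one_div (a b t : ℝ) : aj a (1 / b) (1 / t) = -aj a b t := by
  simp only [aj, one_div, inv_div_inv]
  ring

lemma phi_neg (x : ℝ) : phi (-x) = phi x := by
  simp only [phi, neg_sq]

lemma bsJacobian_one_div_one_div (a b : ℝ) {t : ℝ} (ht : 0 < t) :
    (1 / t) ^ (-(3:ℝ) / 2) * (1 / t + 1 / b) / (2 * a * √(1 / b))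
      = t ^ 2 * (t ^ (-(3:ℝ) / 2) * (t + b) / (2 * a * √b)) := by
  have hpow : (1 / t) ^ (-(3:ℝ) / 2) = t ^ (-(3:ℝ) / 2) * t ^ (3:ℕ) := by
    rw [one_div, inv_rpow ht.le, ← rpow_neg ht.le, ← rpow_natCast, ← rpow_add ht]
    norm_num
  rw [hpow, one_div b, sqrt_inv]
  rcases le_or_gt b 0 with hb | hb
  · simp [sqrt_eq_zero'.mpr hb]
  · have hsb : √b ≠ 0 := (sqrt_pos.mpr hb).ne'
    field_simp
    rw [sq_sqrt hb.le]
    ring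

theorem SBVBS_reciprocal_first_general (a1 a2 b1 b2 l t1 t2 : ℝ)
    (ht1 : 0 < t1) :
    fSBVBS a1 a2 (1 / b1) b2 (-l) (1 / t1) t2 / t1 ^ 2
      = fSBVBS a1 a2 b1 b2 l t1 t2 := by
  rw [div_eq_iff (pow_ne_zero 2 ht1.ne')]
  simp only [fSBVBS, aj_one_div_one_div, phi_neg, neg_mul_neg, bsJacobian_one_div_one_div _ _ ht1]
  ring

theorem SBVBS_reciprocal_first (a1 a2 b1 b2 l t1 t2 : ℝ)
    (ha1 : 0 < a1) (ha2 : 0 < a2) (hb1 : 0 < b1) (hb2 : 0 < b2)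
    (ht1 : 0 < t1) (ht2 : 0 < t2) :
    fSBVBS a1 a2 (1 / b1) b2 (-l) (1 / t1) t2 / t1 ^ 2
      = fSBVBS a1 a2 b1 b2 l t1 t2 :=
  SBVBS_reciprocal_first_general a1 a2 b1 b2 l t1 t2 ht1
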